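/- arXiv:2210.03175 — 5 statements merged into one kernel-verified Lean document; each statement's English description precedes it below -/
import Mathlib

section
/- Let A and Ã be random variables on {1,2}, f(X) a binary random variable with values in {1,2}, such that Ã is conditionally independent of f(X) given A. Let e1 = P(A=1|Ã=2), e2 = P(A=2|Ã=1), h = P(f(X)=1|A=1), h' = P(f(X)=1|A=2), h̃ = P(f(X)=1|Ã=1), h̃' = P(f(X)=1|Ã=2). Then |h̃ - h̃'| = |h - h'|·|1 - e1 - e2|. -/
open MeasureTheory

/-- Conditional probability `P(s | t)` as a real number. -/
noncomputable def condP {Ω : Type*} [MeasurableSpace Ω] (μ : Measure Ω) (s t : Set Ω) : ℝ :=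
  (μ (s ∩ t)).toReal / (μ t).toReal

/-- for binary `A`, `Ã`, `f(X)` with `Ã ⟂ f(X) | A`,
`|h̃ - h̃'| = |h - h'| · |1 - e1 - e2|`. -/
theorem stmt0 {Ω : Type*} [MeasurableSpace Ω] (μ : Measure Ω) [IsProbabilityMeasure μ]
    (A Atil fX : Ω → Fin 2)
    (hA : Measurable A) (hAt : Measurable Atil) (hf : Measurable fX)
    (hposA : ∀ a : Fin 2, 0 < μ (A ⁻¹' {a}))
    (hposAt : ∀ b : Fin 2, 0 < μ (Atil ⁻¹' {b}))
    (hposfA : ∀ k a : Fin 2, 0 < μ (fX ⁻¹' {k} ∩ A ⁻¹' {a}))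
    (hci : ∀ a b k : Fin 2,
      condP μ (Atil ⁻¹' {b}) (fX ⁻¹' {k} ∩ A ⁻¹' {a}) = condP μ (Atil ⁻¹' {b}) (A ⁻¹' {a}))
    (e1 e2 h h' ht ht' : ℝ)
    (he1 : e1 = condP μ (A ⁻¹' {0}) (Atil ⁻¹' {1}))
    (he2 : e2 = condP μ (A ⁻¹' {1}) (Atil ⁻¹' {0}))
    (hh : h = condP μ (fX ⁻¹' {0}) (A ⁻¹' {0}))
    (hh' : h' = condP μ (fX ⁻¹' {0}) (A ⁻¹' {1}))
    (hht : ht = condP μ (fX ⁻¹' {0}) (Atil ⁻¹' {0}))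
    (hht' : ht' = condP μ (fX ⁻¹' {0}) (Atil ⁻¹' {1})) :
    |ht - ht'| = |h - h'| * |1 - e1 - e2| := by
  classical
  have htwo : ∀ x : Fin 2, x = 0 ∨ x = 1 := by decide
  have mA : ∀ a : Fin 2, MeasurableSet (A ⁻¹' {a}) := fun a => hA (measurableSet_singleton a)
  have mAt : ∀ b : Fin 2, MeasurableSet (Atil ⁻¹' {b}) := fun b => hAt (measurableSet_singleton b)
  have mf : MeasurableSet (fX ⁻¹' ({0} : Set (Fin 2))) := hf (measurableSet_singleton 0)
  -- decomposition of any measurable set by A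
  have hsum : ∀ s : Set Ω, MeasurableSet s →
      (μ s).toReal = (μ (s ∩ A ⁻¹' {0})).toReal + (μ (s ∩ A ⁻¹' {1})).toReal := by
    intro s hs
    rw [← ENNReal.toReal_add (measure_ne_top _ _) (measure_ne_top _ _)]
    congr 1
    have hd : Disjoint (s ∩ A ⁻¹' ({0} : Set (Fin 2))) (s ∩ A ⁻¹' {1}) := by
      refine Set.disjoint_left.mpr ?_
      rintro ω ⟨-, h0⟩ ⟨-, h1⟩
      simp only [Set.mem_preimage, Set.mem_singleton_iff] at h0 h1
      exact absurd (h0 ▸ h1) (by decide)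
    rw [← measure_union hd (hs.inter (mA 1)), ← Set.inter_union_distrib_left]
    have hu : A ⁻¹' ({0} : Set (Fin 2)) ∪ A ⁻¹' {1} = Set.univ := by
      ext ω
      simp only [Set.mem_union, Set.mem_preimage, Set.mem_singleton_iff, Set.mem_univ, iff_true]
      exact htwo (A ω)
    rw [hu, Set.inter_univ]
  have posR : ∀ s : Set Ω, 0 < μ s → 0 < (μ s).toReal := fun s hp =>
    ENNReal.toReal_pos hp.ne' (measure_ne_top _ _)
  have pA : ∀ a : Fin 2, 0 < (μ (A ⁻¹' {a})).toReal := fun a => posR _ (hposA a)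
  have pAt : ∀ b : Fin 2, 0 < (μ (Atil ⁻¹' {b})).toReal := fun b => posR _ (hposAt b)
  have pfA : ∀ a : Fin 2, 0 < (μ (fX ⁻¹' {0} ∩ A ⁻¹' {a})).toReal := fun a =>
    posR _ (hposfA 0 a)
  -- CI in cross-multiplied real form
  have hciR : ∀ a b : Fin 2,
      (μ ((fX ⁻¹' {0} ∩ Atil ⁻¹' {b}) ∩ A ⁻¹' {a})).toReal * (μ (A ⁻¹' {a})).toReal
        = (μ (Atil ⁻¹' {b} ∩ A ⁻¹' {a})).toReal * (μ (fX ⁻¹' {0} ∩ A ⁻¹' {a})).toReal := by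
    intro a b
    have hc := hci a b 0
    unfold condP at hc
    rw [div_eq_div_iff (pfA a).ne' (pA a).ne'] at hc
    have hset : Atil ⁻¹' {b} ∩ (fX ⁻¹' {0} ∩ A ⁻¹' {a})
        = (fX ⁻¹' {0} ∩ Atil ⁻¹' {b}) ∩ A ⁻¹' {a} := by
      ext ω; simp only [Set.mem_inter_iff, Set.mem_preimage, Set.mem_singleton_iff]; tauto
    rw [hset] at hc
    exact hc
  have Hh : (μ (fX ⁻¹' {0} ∩ A ⁻¹' ({0} : Set (Fin 2)))).toReal
      = h * (μ (A ⁻¹' ({0} : Set (Fin 2)))).toReal := by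
    rw [hh]; unfold condP; exact (div_mul_cancel₀ _ (pA 0).ne').symm
  have Hh' : (μ (fX ⁻¹' {0} ∩ A ⁻¹' ({1} : Set (Fin 2)))).toReal
      = h' * (μ (A ⁻¹' ({1} : Set (Fin 2)))).toReal := by
    rw [hh']; unfold condP; exact (div_mul_cancel₀ _ (pA 1).ne').symm
  -- r a b = q a b * h_a
  have hr0 : ∀ b : Fin 2,
      (μ ((fX ⁻¹' {0} ∩ Atil ⁻¹' {b}) ∩ A ⁻¹' ({0} : Set (Fin 2)))).toReal
        = (μ (Atil ⁻¹' {b} ∩ A ⁻¹' ({0} : Set (Fin 2)))).toReal * h := by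
    intro b
    have hc := hciR 0 b
    rw [Hh] at hc
    exact mul_right_cancel₀ (pA 0).ne' (by rw [hc]; ring)
  have hr1 : ∀ b : Fin 2,
      (μ ((fX ⁻¹' {0} ∩ Atil ⁻¹' {b}) ∩ A ⁻¹' ({1} : Set (Fin 2)))).toReal
        = (μ (Atil ⁻¹' {b} ∩ A ⁻¹' ({1} : Set (Fin 2)))).toReal * h' := by
    intro b
    have hc := hciR 1 b
    rw [Hh'] at hc
    exact mul_right_cancel₀ (pA 1).ne' (by rw [hc]; ring)
  -- ht * P(At=b) equations
  have Hht : ht * (μ (Atil ⁻¹' ({0} : Set (Fin 2)))).toReal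
      = (μ (Atil ⁻¹' {0} ∩ A ⁻¹' ({0} : Set (Fin 2)))).toReal * h
        + (μ (Atil ⁻¹' {0} ∩ A ⁻¹' ({1} : Set (Fin 2)))).toReal * h' := by
    rw [hht]; unfold condP
    rw [div_mul_cancel₀ _ (pAt 0).ne']
    rw [hsum _ (mf.inter (mAt 0)), hr0 0, hr1 0]
  have Hht' : ht' * (μ (Atil ⁻¹' ({1} : Set (Fin 2)))).toReal
      = (μ (Atil ⁻¹' {1} ∩ A ⁻¹' ({0} : Set (Fin 2)))).toReal * h
        + (μ (Atil ⁻¹' {1} ∩ A ⁻¹' ({1} : Set (Fin 2)))).toReal * h' := by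
    rw [hht']; unfold condP
    rw [div_mul_cancel₀ _ (pAt 1).ne']
    rw [hsum _ (mf.inter (mAt 1)), hr0 1, hr1 1]
  -- partition of Atil sets by A
  have Hpart0 : (μ (Atil ⁻¹' ({0} : Set (Fin 2)))).toReal
      = (μ (Atil ⁻¹' {0} ∩ A ⁻¹' ({0} : Set (Fin 2)))).toReal
        + (μ (Atil ⁻¹' {0} ∩ A ⁻¹' ({1} : Set (Fin 2)))).toReal := hsum _ (mAt 0)
  have Hpart1 : (μ (Atil ⁻¹' ({1} : Set (Fin 2)))).toReal
      = (μ (Atil ⁻¹' {1} ∩ A ⁻¹' ({0} : Set (Fin 2)))).toReal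
        + (μ (Atil ⁻¹' {1} ∩ A ⁻¹' ({1} : Set (Fin 2)))).toReal := hsum _ (mAt 1)
  -- e1, e2 cleared of denominators
  have He1 : e1 * (μ (Atil ⁻¹' ({1} : Set (Fin 2)))).toReal
      = (μ (Atil ⁻¹' {1} ∩ A ⁻¹' ({0} : Set (Fin 2)))).toReal := by
    rw [he1]; unfold condP
    rw [div_mul_cancel₀ _ (pAt 1).ne', Set.inter_comm]
  have He2 : e2 * (μ (Atil ⁻¹' ({0} : Set (Fin 2)))).toReal
      = (μ (Atil ⁻¹' {0} ∩ A ⁻¹' ({1} : Set (Fin 2)))).toReal := by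
    rw [he2]; unfold condP
    rw [div_mul_cancel₀ _ (pAt 0).ne', Set.inter_comm]
  -- derive closed forms for ht, ht'
  have Eht : ht = h * (1 - e2) + h' * e2 := by
    have := Hht
    rw [← He2] at this
    have hq : (μ (Atil ⁻¹' ({0} : Set (Fin 2)) ∩ A ⁻¹' ({0} : Set (Fin 2)))).toReal
        = (1 - e2) * (μ (Atil ⁻¹' ({0} : Set (Fin 2)))).toReal := by
      have := Hpart0
      rw [← He2] at this
      linarith
    rw [hq] at this
    have := mul_right_cancel₀ (pAt 0).ne' (by rw [this]; ring :
      ht * (μ (Atil ⁻¹' ({0} : Set (Fin 2)))).toReal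
        = (h * (1 - e2) + h' * e2) * (μ (Atil ⁻¹' ({0} : Set (Fin 2)))).toReal)
    exact this
  have Eht' : ht' = h * e1 + h' * (1 - e1) := by
    have := Hht'
    rw [← He1] at this
    have hq : (μ (Atil ⁻¹' ({1} : Set (Fin 2)) ∩ A ⁻¹' ({1} : Set (Fin 2)))).toReal
        = (1 - e1) * (μ (Atil ⁻¹' ({1} : Set (Fin 2)))).toReal := by
      have := Hpart1
      rw [← He1] at this
      linarith
    rw [hq] at this
    have := mul_right_cancel₀ (pAt 1).ne' (by rw [this]; ring :
      ht' * (μ (Atil ⁻¹' ({1} : Set (Fin 2)))).toReal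
        = (h * e1 + h' * (1 - e1)) * (μ (Atil ⁻¹' ({1} : Set (Fin 2)))).toReal)
    exact this
  have key : ht - ht' = (h - h') * (1 - e1 - e2) := by
    rw [Eht, Eht']; ring
  rw [key, abs_mul]
end

section
/- Under the setting of the previous statement, the estimation error of the noisy demographic parity satisfies the exact identity | |h̃ - h̃'| - |h - h'| | = |h - h'|·(e1 + e2) whenever e1 + e2 ≤ 1, where e1 = P(A=1|Ã=2) and e2 = P(A=2|Ã=1). -/
open MeasureTheory

/-!
Conditioning on `Ã = b` and splitting over the value of `A`, the independence of `Ã` and `f(X)`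
given `A` makes `P(f(X) = 1 | Ã = b)` the mixture of `h` and `h'` with weights `P(A = a | Ã = b)`:
`h̃ = (1 - e2) h + e2 h'` and `h̃' = e1 h + (1 - e1) h'`. Hence `h̃ - h̃' = (h - h') (1 - e1 - e2)`,
and when `e1 + e2 ≤ 1` the two absolute differences differ by exactly `|h - h'| (e1 + e2)`.
-/

section ConditionalProbability

variable {Ω ι : Type*} [MeasurableSpace Ω] {μ : Measure Ω}

lemma condP_nonneg (s t : Set Ω) : 0 ≤ condP μ s t := by
  unfold condP
  positivity

lemma measureReal_inter_inter_eq_condP_mul [IsFiniteMeasure μ] {s t u : Set Ω}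
    (h : condP μ s (t ∩ u) = condP μ s u) :
    μ.real (s ∩ (t ∩ u)) = condP μ s u * μ.real (t ∩ u) := by
  by_cases h0 : μ.real (t ∩ u) = 0
  · rw [h0, mul_zero]
    exact le_antisymm (h0 ▸ measureReal_mono Set.inter_subset_right) measureReal_nonneg
  · rw [← h, condP, ← measureReal_def, ← measureReal_def, div_mul_cancel₀ _ h0]

variable [IsFiniteMeasure μ] [Fintype ι] [MeasurableSpace ι] [MeasurableSingletonClass ι]
  {A : Ω → ι}

lemma sum_measureReal_preimage_inter (hA : Measurable A) (s : Set Ω) :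
    ∑ a, μ.real (A ⁻¹' {a} ∩ s) = μ.real s := by
  have hfib : ∀ a ∈ Finset.univ, MeasurableSet (A ⁻¹' {a}) :=
    fun a _ => hA (measurableSet_singleton a)
  simpa [measureReal_restrict_apply (hfib _ (Finset.mem_univ _))]
    using sum_measureReal_preimage_singleton (μ := μ.restrict s) Finset.univ hfib

lemma sum_condP_preimage_eq_one (hA : Measurable A) {t : Set Ω} (ht : μ t ≠ 0) :
    ∑ a, condP μ (A ⁻¹' {a}) t = 1 := by
  have ht' : μ.real t ≠ 0 := (measureReal_ne_zero_iff (measure_ne_top μ t)).2 ht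
  simp only [condP, ← measureReal_def, ← Finset.sum_div, sum_measureReal_preimage_inter hA,
    div_self ht']

lemma condP_eq_sum_condP_mul_condP (hA : Measurable A) {s t : Set Ω}
    (hci : ∀ a, condP μ t (s ∩ A ⁻¹' {a}) = condP μ t (A ⁻¹' {a})) :
    condP μ s t = ∑ a, condP μ (A ⁻¹' {a}) t * condP μ s (A ⁻¹' {a}) := by
  have hfiber : ∀ a, μ.real (A ⁻¹' {a} ∩ (s ∩ t)) =
      μ.real (A ⁻¹' {a} ∩ t) * condP μ s (A ⁻¹' {a}) := by
    intro a
    rw [show A ⁻¹' {a} ∩ (s ∩ t) = t ∩ (s ∩ A ⁻¹' {a}) by ext; simp only [Set.mem_inter_iff]; tauto,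
      measureReal_inter_inter_eq_condP_mul (hci a), Set.inter_comm (A ⁻¹' {a})]
    simp only [condP, ← measureReal_def]
    ring
  simp only [condP, ← measureReal_def, ← sum_measureReal_preimage_inter hA (s ∩ t), hfiber,
    Finset.sum_div, div_mul_eq_mul_div]

end ConditionalProbability

lemma abs_abs_sub_abs_eq_abs_mul {x y e : ℝ} (hxy : x = y * (1 - e)) (he₀ : 0 ≤ e)
    (he₁ : e ≤ 1) : |(|x| - |y|)| = |y| * e := by
  rw [hxy, abs_mul, abs_of_nonneg (sub_nonneg.2 he₁),
    show |y| * (1 - e) - |y| = -(|y| * e) by ring, abs_neg, abs_of_nonneg (by positivity)]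

theorem stmt1_general {Ω : Type*} [MeasurableSpace Ω] (μ : Measure Ω) [IsProbabilityMeasure μ]
    (A Atil fX : Ω → Fin 2)
    (hA : Measurable A)
    (hposAt : ∀ b : Fin 2, 0 < μ (Atil ⁻¹' {b}))
    (hci : ∀ a b k : Fin 2,
      condP μ (Atil ⁻¹' {b}) (fX ⁻¹' {k} ∩ A ⁻¹' {a}) = condP μ (Atil ⁻¹' {b}) (A ⁻¹' {a}))
    (e1 e2 h h' ht ht' : ℝ)
    (he1 : e1 = condP μ (A ⁻¹' {0}) (Atil ⁻¹' {1}))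
    (he2 : e2 = condP μ (A ⁻¹' {1}) (Atil ⁻¹' {0}))
    (hh : h = condP μ (fX ⁻¹' {0}) (A ⁻¹' {0}))
    (hh' : h' = condP μ (fX ⁻¹' {0}) (A ⁻¹' {1}))
    (hht : ht = condP μ (fX ⁻¹' {0}) (Atil ⁻¹' {0}))
    (hht' : ht' = condP μ (fX ⁻¹' {0}) (Atil ⁻¹' {1})) :
    e1 + e2 ≤ 1 →
    abs (abs (ht - ht') - abs (h - h')) = |h - h'| * (e1 + e2) := by
  intro hle
  subst he1 he2 hh hh' hht hht'
  have mixture : ∀ b, condP μ (fX ⁻¹' {0}) (Atil ⁻¹' {b}) =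
      condP μ (A ⁻¹' {0}) (Atil ⁻¹' {b}) * condP μ (fX ⁻¹' {0}) (A ⁻¹' {0}) +
        condP μ (A ⁻¹' {1}) (Atil ⁻¹' {b}) * condP μ (fX ⁻¹' {0}) (A ⁻¹' {1}) := fun b => by
    rw [condP_eq_sum_condP_mul_condP hA (fun a => hci a b 0), Fin.sum_univ_two]
  have weights : ∀ b, condP μ (A ⁻¹' {0}) (Atil ⁻¹' {b}) + condP μ (A ⁻¹' {1}) (Atil ⁻¹' {b}) = 1 :=
    fun b => by rw [← Fin.sum_univ_two (fun a => condP μ (A ⁻¹' {a}) (Atil ⁻¹' {b})),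
      sum_condP_preimage_eq_one hA (hposAt b).ne']
  refine abs_abs_sub_abs_eq_abs_mul ?_ (add_nonneg (condP_nonneg _ _) (condP_nonneg _ _)) hle
  linear_combination mixture 0 - mixture 1 + condP μ (fX ⁻¹' {0}) (A ⁻¹' {0}) * weights 0
    - condP μ (fX ⁻¹' {0}) (A ⁻¹' {1}) * weights 1

/-- exact identity for the DP estimation error in the binary case
whenever `e1 + e2 ≤ 1`. -/
theorem stmt1 {Ω : Type*} [MeasurableSpace Ω] (μ : Measure Ω) [IsProbabilityMeasure μ]
    (A Atil fX : Ω → Fin 2)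
    (hA : Measurable A) (hAt : Measurable Atil) (hf : Measurable fX)
    (hposA : ∀ a : Fin 2, 0 < μ (A ⁻¹' {a}))
    (hposAt : ∀ b : Fin 2, 0 < μ (Atil ⁻¹' {b}))
    (hposfA : ∀ k a : Fin 2, 0 < μ (fX ⁻¹' {k} ∩ A ⁻¹' {a}))
    (hci : ∀ a b k : Fin 2,
      condP μ (Atil ⁻¹' {b}) (fX ⁻¹' {k} ∩ A ⁻¹' {a}) = condP μ (Atil ⁻¹' {b}) (A ⁻¹' {a}))
    (e1 e2 h h' ht ht' : ℝ)
    (he1 : e1 = condP μ (A ⁻¹' {0}) (Atil ⁻¹' {1}))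
    (he2 : e2 = condP μ (A ⁻¹' {1}) (Atil ⁻¹' {0}))
    (hh : h = condP μ (fX ⁻¹' {0}) (A ⁻¹' {0}))
    (hh' : h' = condP μ (fX ⁻¹' {0}) (A ⁻¹' {1}))
    (hht : ht = condP μ (fX ⁻¹' {0}) (Atil ⁻¹' {0}))
    (hht' : ht' = condP μ (fX ⁻¹' {0}) (Atil ⁻¹' {1})) :
    e1 + e2 ≤ 1 →
    abs (abs (ht - ht') - abs (h - h')) = |h - h'| * (e1 + e2) :=
  stmt1_general μ A Atil fX hA hposAt hci e1 e2 h h' ht ht' he1 he2 hh hh' hht hht'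
end

section
/- In the setting of the previous statement, if additionally T_kᵀ Λ_p is invertible, then the clean fairness vector recovers as H[:,k] = (T_kᵀ Λ_p)^{-1} Λ_p̃ H̃[:,k]. -/
open MeasureTheory Matrix

/-- if moreover `T_kᵀ Λ_p` is invertible, then
`H[:,k] = (T_kᵀ Λ_p)⁻¹ Λ_p̃ H̃[:,k]`. -/
theorem stmt3 {Ω : Type*} [MeasurableSpace Ω] (μ : Measure Ω) [IsProbabilityMeasure μ]
    {M K : ℕ} (A Atil : Ω → Fin M) (fX : Ω → Fin K)
    (hA : Measurable A) (hAt : Measurable Atil) (hf : Measurable fX)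
    (hposA : ∀ a : Fin M, 0 < μ (A ⁻¹' {a}))
    (hposAt : ∀ b : Fin M, 0 < μ (Atil ⁻¹' {b}))
    (hposfA : ∀ (k : Fin K) (a : Fin M), 0 < μ (fX ⁻¹' {k} ∩ A ⁻¹' {a}))
    (T : Fin K → Matrix (Fin M) (Fin M) ℝ)
    (hT : ∀ (k : Fin K) (a b : Fin M),
      T k a b = condP μ (Atil ⁻¹' {b}) (fX ⁻¹' {k} ∩ A ⁻¹' {a}))
    (p ptil : Fin M → ℝ)
    (hp : ∀ a : Fin M, p a = (μ (A ⁻¹' {a})).toReal)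
    (hptil : ∀ b : Fin M, ptil b = (μ (Atil ⁻¹' {b})).toReal)
    (H Htil : Fin K → Fin M → ℝ)
    (hH : ∀ (k : Fin K) (a : Fin M), H k a = condP μ (fX ⁻¹' {k}) (A ⁻¹' {a}))
    (hHtil : ∀ (k : Fin K) (b : Fin M), Htil k b = condP μ (fX ⁻¹' {k}) (Atil ⁻¹' {b})) :
    ∀ k : Fin K, IsUnit ((T k)ᵀ * Matrix.diagonal p).det →
      H k = ((T k)ᵀ * Matrix.diagonal p)⁻¹.mulVec
        ((Matrix.diagonal ptil).mulVec (Htil k)) := by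
  intro k hdet
  -- key: ((T k)ᵀ * diagonal p).mulVec (H k) = (diagonal ptil).mulVec (Htil k)
  have key : ((T k)ᵀ * Matrix.diagonal p).mulVec (H k)
      = (Matrix.diagonal ptil).mulVec (Htil k) := by
    funext b
    have hpart : ∀ s : Set Ω, MeasurableSet s →
        μ s = ∑ a : Fin M, μ (s ∩ A ⁻¹' {a}) := by
      intro s hs
      have hd : Pairwise (Function.onFun Disjoint (fun a : Fin M => s ∩ A ⁻¹' {a})) := by
        intro a a' haa'
        refine Set.disjoint_left.2 ?_
        rintro x ⟨-, hx⟩ ⟨-, hx'⟩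
        exact haa' (hx.symm.trans hx')
      have hm : ∀ a : Fin M, MeasurableSet (s ∩ A ⁻¹' {a}) :=
        fun a => hs.inter (hA (measurableSet_singleton a))
      have hu : s = ⋃ a : Fin M, s ∩ A ⁻¹' {a} := by
        ext x; simp
      calc μ s = μ (⋃ a : Fin M, s ∩ A ⁻¹' {a}) := by rw [← hu]
        _ = ∑' a : Fin M, μ (s ∩ A ⁻¹' {a}) := measure_iUnion hd hm
        _ = ∑ a : Fin M, μ (s ∩ A ⁻¹' {a}) := tsum_fintype _
    have hfin : ∀ s : Set Ω, μ s ≠ ⊤ := fun s => measure_ne_top μ s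
    have hterm : ∀ a : Fin M,
        T k a b * p a * H k a
          = (μ (Atil ⁻¹' {b} ∩ (fX ⁻¹' {k} ∩ A ⁻¹' {a}))).toReal := by
      intro a
      have hx : (μ (fX ⁻¹' {k} ∩ A ⁻¹' {a})).toReal ≠ 0 :=
        ENNReal.toReal_ne_zero.2 ⟨(hposfA k a).ne', hfin _⟩
      have hy : (μ (A ⁻¹' {a})).toReal ≠ 0 :=
        ENNReal.toReal_ne_zero.2 ⟨(hposA a).ne', hfin _⟩
      rw [hT, hp, hH]
      unfold condP
      field_simp
    have hdiag : ((Matrix.diagonal ptil).mulVec (Htil k)) b = ptil b * Htil k b := by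
      simp [Matrix.mulVec_diagonal]
    have hrhs : ptil b * Htil k b = (μ (fX ⁻¹' {k} ∩ Atil ⁻¹' {b})).toReal := by
      have hy : (μ (Atil ⁻¹' {b})).toReal ≠ 0 :=
        ENNReal.toReal_ne_zero.2 ⟨(hposAt b).ne', hfin _⟩
      rw [hptil, hHtil]
      unfold condP
      field_simp
    have hlhs : (((T k)ᵀ * Matrix.diagonal p).mulVec (H k)) b
        = ∑ a : Fin M, T k a b * p a * H k a := by
      simp [Matrix.mulVec, dotProduct, Matrix.mul_apply, Matrix.diagonal,
        Finset.sum_mul]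
    rw [hlhs, hdiag, hrhs]
    have hmeas : MeasurableSet (Atil ⁻¹' {b} ∩ fX ⁻¹' {k}) :=
      (hAt (measurableSet_singleton b)).inter (hf (measurableSet_singleton k))
    calc ∑ a : Fin M, T k a b * p a * H k a
        = ∑ a : Fin M, (μ (Atil ⁻¹' {b} ∩ (fX ⁻¹' {k} ∩ A ⁻¹' {a}))).toReal := by
          exact Finset.sum_congr rfl fun a _ => hterm a
      _ = ∑ a : Fin M, (μ ((Atil ⁻¹' {b} ∩ fX ⁻¹' {k}) ∩ A ⁻¹' {a})).toReal := by
          simp [Set.inter_assoc]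
      _ = (∑ a : Fin M, μ ((Atil ⁻¹' {b} ∩ fX ⁻¹' {k}) ∩ A ⁻¹' {a})).toReal := by
          rw [ENNReal.toReal_sum]; intro a _; exact hfin _
      _ = (μ (Atil ⁻¹' {b} ∩ fX ⁻¹' {k})).toReal := by
          rw [← hpart _ hmeas]
      _ = (μ (fX ⁻¹' {k} ∩ Atil ⁻¹' {b})).toReal := by rw [Set.inter_comm]
  rw [← key, Matrix.mulVec_mulVec, Matrix.nonsing_inv_mul _ hdet, Matrix.one_mulVec]
end

section
/- (Error upper bound of noisy DP metrics, binary simplified form) Let A, Ã ∈ {1,2} and f(X) ∈ {1,2} with all conditioning events of positive probability, and assume Ã ⟂ f(X) | A. Define the true DP disparity Δ = (1/2)Σ_{k∈{1,2}} |P(f(X)=k|A=1) - P(f(X)=k|A=2)| and the noisy DP disparity Δ̃ analogously with Ã in place of A. Then |Δ̃ - Δ| ≤ 2δ(e1 + e2), where δ = |P(f(X)=1|A=1) - P(f(X)=1|A=2)|/2, e1 = P(A=1|Ã=2), e2 = P(A=2|Ã=1). -/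
open MeasureTheory

/-- binary simplified error bound `|Δ̃ - Δ| ≤ 2δ(e1 + e2)`
for the noisy demographic parity metric, under `Ã ⟂ f(X) | A`. -/
theorem stmt12 {Ω : Type*} [MeasurableSpace Ω] (μ : Measure Ω) [IsProbabilityMeasure μ]
    (A Atil fX : Ω → Fin 2)
    (hA : Measurable A) (hAt : Measurable Atil) (hf : Measurable fX)
    (hposA : ∀ a : Fin 2, 0 < μ (A ⁻¹' {a}))
    (hposAt : ∀ b : Fin 2, 0 < μ (Atil ⁻¹' {b}))
    (hposfA : ∀ k a : Fin 2, 0 < μ (fX ⁻¹' {k} ∩ A ⁻¹' {a}))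
    (hci : ∀ a b k : Fin 2,
      condP μ (Atil ⁻¹' {b}) (fX ⁻¹' {k} ∩ A ⁻¹' {a}) = condP μ (Atil ⁻¹' {b}) (A ⁻¹' {a}))
    (Δ Δtil δ e1 e2 : ℝ)
    (hΔ : Δ = (1 / 2) * ∑ k : Fin 2,
      |condP μ (fX ⁻¹' {k}) (A ⁻¹' {0}) - condP μ (fX ⁻¹' {k}) (A ⁻¹' {1})|)
    (hΔtil : Δtil = (1 / 2) * ∑ k : Fin 2,
      |condP μ (fX ⁻¹' {k}) (Atil ⁻¹' {0}) - condP μ (fX ⁻¹' {k}) (Atil ⁻¹' {1})|)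
    (hδ : δ = |condP μ (fX ⁻¹' {0}) (A ⁻¹' {0}) - condP μ (fX ⁻¹' {0}) (A ⁻¹' {1})| / 2)
    (he1 : e1 = condP μ (A ⁻¹' {0}) (Atil ⁻¹' {1}))
    (he2 : e2 = condP μ (A ⁻¹' {1}) (Atil ⁻¹' {0})) :
    |Δtil - Δ| ≤ 2 * δ * (e1 + e2) := by
  classical
  have hcnn : ∀ s t : Set Ω, 0 ≤ condP μ s t := fun s t =>
    div_nonneg ENNReal.toReal_nonneg ENNReal.toReal_nonneg
  set m : Set Ω → ℝ := fun s => (μ s).toReal with hm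
  have hmpos : ∀ s : Set Ω, 0 < μ s → 0 < m s := fun s hs =>
    ENNReal.toReal_pos hs.ne' (measure_ne_top μ s)
  -- complement identities for Fin 2 valued maps
  have hcA : (A ⁻¹' {(1:Fin 2)}) = (A ⁻¹' {(0:Fin 2)})ᶜ := by
    ext ω
    simp only [Set.mem_preimage, Set.mem_singleton_iff, Set.mem_compl_iff]
    generalize A ω = x; revert x; decide
  have hcf : (fX ⁻¹' {(1:Fin 2)}) = (fX ⁻¹' {(0:Fin 2)})ᶜ := by
    ext ω
    simp only [Set.mem_preimage, Set.mem_singleton_iff, Set.mem_compl_iff]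
    generalize fX ω = x; revert x; decide
  -- splitting a set along the A-partition, real-valued
  have splitA : ∀ s : Set Ω, m (s ∩ A ⁻¹' {0}) + m (s ∩ A ⁻¹' {1}) = m s := by
    intro s
    have h : μ (s ∩ A ⁻¹' {0}) + μ (s ∩ A ⁻¹' {1}) = μ s := by
      rw [hcA, ← Set.diff_eq]
      exact measure_inter_add_diff s (hA (measurableSet_singleton 0))
    simp only [hm]
    rw [← ENNReal.toReal_add (measure_ne_top _ _) (measure_ne_top _ _), h]
  have splitf : ∀ s : Set Ω, m (s ∩ fX ⁻¹' {0}) + m (s ∩ fX ⁻¹' {1}) = m s := by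
    intro s
    have h : μ (s ∩ fX ⁻¹' {0}) + μ (s ∩ fX ⁻¹' {1}) = μ s := by
      rw [hcf, ← Set.diff_eq]
      exact measure_inter_add_diff s (hf (measurableSet_singleton 0))
    simp only [hm]
    rw [← ENNReal.toReal_add (measure_ne_top _ _) (measure_ne_top _ _), h]
  -- product formula from conditional independence
  have hprod : ∀ a b k : Fin 2,
      m (fX ⁻¹' {k} ∩ A ⁻¹' {a} ∩ Atil ⁻¹' {b}) =
        condP μ (fX ⁻¹' {k}) (A ⁻¹' {a}) * condP μ (A ⁻¹' {a}) (Atil ⁻¹' {b})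
          * m (Atil ⁻¹' {b}) := by
    intro a b k
    have h := hci a b k
    unfold condP at h ⊢
    rw [Set.inter_comm (Atil ⁻¹' {b}) (fX ⁻¹' {k} ∩ A ⁻¹' {a})] at h
    rw [Set.inter_comm (Atil ⁻¹' {b}) (A ⁻¹' {a})] at h
    have h1 : (0:ℝ) < m (fX ⁻¹' {k} ∩ A ⁻¹' {a}) := hmpos _ (hposfA k a)
    have h2 : (0:ℝ) < m (A ⁻¹' {a}) := hmpos _ (hposA a)
    have h3 : (0:ℝ) < m (Atil ⁻¹' {b}) := hmpos _ (hposAt b)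
    simp only [hm] at h h1 h2 h3 ⊢
    field_simp at h ⊢
    nlinarith [h]
  -- mixture formula
  have hq : ∀ b k : Fin 2, condP μ (fX ⁻¹' {k}) (Atil ⁻¹' {b}) =
      condP μ (fX ⁻¹' {k}) (A ⁻¹' {0}) * condP μ (A ⁻¹' {0}) (Atil ⁻¹' {b})
      + condP μ (fX ⁻¹' {k}) (A ⁻¹' {1}) * condP μ (A ⁻¹' {1}) (Atil ⁻¹' {b}) := by
    intro b k
    have hs := splitA (fX ⁻¹' {k} ∩ Atil ⁻¹' {b})
    have e0 : (fX ⁻¹' {k} ∩ Atil ⁻¹' {b}) ∩ A ⁻¹' {(0:Fin 2)}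
        = fX ⁻¹' {k} ∩ A ⁻¹' {0} ∩ Atil ⁻¹' {b} := Set.inter_right_comm _ _ _
    have e1' : (fX ⁻¹' {k} ∩ Atil ⁻¹' {b}) ∩ A ⁻¹' {(1:Fin 2)}
        = fX ⁻¹' {k} ∩ A ⁻¹' {1} ∩ Atil ⁻¹' {b} := Set.inter_right_comm _ _ _
    rw [e0, e1', hprod 0 b k, hprod 1 b k] at hs
    have h3 : (0:ℝ) < m (Atil ⁻¹' {b}) := hmpos _ (hposAt b)
    show m (fX ⁻¹' {k} ∩ Atil ⁻¹' {b}) / m (Atil ⁻¹' {b}) = _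
    rw [← hs]
    field_simp
  -- r sums to 1
  have hrsum : ∀ b : Fin 2, condP μ (A ⁻¹' {0}) (Atil ⁻¹' {b})
      + condP μ (A ⁻¹' {1}) (Atil ⁻¹' {b}) = 1 := by
    intro b
    have hs := splitA (Atil ⁻¹' {b})
    have h3 : (0:ℝ) < m (Atil ⁻¹' {b}) := hmpos _ (hposAt b)
    show m (A ⁻¹' {0} ∩ Atil ⁻¹' {b}) / m (Atil ⁻¹' {b})
        + m (A ⁻¹' {1} ∩ Atil ⁻¹' {b}) / m (Atil ⁻¹' {b}) = 1
    rw [Set.inter_comm (A ⁻¹' {0}), Set.inter_comm (A ⁻¹' {1})]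
    field_simp
    linarith [hs]
  -- p sums to 1 over k, conditioned on A
  have hpsum : ∀ a : Fin 2, condP μ (fX ⁻¹' {0}) (A ⁻¹' {a})
      + condP μ (fX ⁻¹' {1}) (A ⁻¹' {a}) = 1 := by
    intro a
    have hs := splitf (A ⁻¹' {a})
    have h2 : (0:ℝ) < m (A ⁻¹' {a}) := hmpos _ (hposA a)
    show m (fX ⁻¹' {0} ∩ A ⁻¹' {a}) / m (A ⁻¹' {a})
        + m (fX ⁻¹' {1} ∩ A ⁻¹' {a}) / m (A ⁻¹' {a}) = 1
    rw [Set.inter_comm (fX ⁻¹' {0}), Set.inter_comm (fX ⁻¹' {1})]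
    field_simp
    linarith [hs]
  have hqsum : ∀ b : Fin 2, condP μ (fX ⁻¹' {0}) (Atil ⁻¹' {b})
      + condP μ (fX ⁻¹' {1}) (Atil ⁻¹' {b}) = 1 := by
    intro b
    rw [hq b 0, hq b 1]
    have h0 := hpsum 0
    have h1 := hpsum 1
    have hr := hrsum b
    linear_combination condP μ (A ⁻¹' {0}) (Atil ⁻¹' {b}) * h0
      + condP μ (A ⁻¹' {1}) (Atil ⁻¹' {b}) * h1 + hr
  -- abbreviations
  set p00 := condP μ (fX ⁻¹' {0}) (A ⁻¹' {0}) with hp00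
  set p01 := condP μ (fX ⁻¹' {0}) (A ⁻¹' {1}) with hp01
  set q0 := condP μ (fX ⁻¹' {0}) (Atil ⁻¹' {0}) with hq0
  set q1 := condP μ (fX ⁻¹' {0}) (Atil ⁻¹' {1}) with hq1
  -- Δ = |p00 - p01|
  have hΔ' : Δ = |p00 - p01| := by
    rw [hΔ, Fin.sum_univ_two]
    have h10 : condP μ (fX ⁻¹' {1}) (A ⁻¹' {0}) = 1 - p00 := by linarith [hpsum 0]
    have h11 : condP μ (fX ⁻¹' {1}) (A ⁻¹' {1}) = 1 - p01 := by linarith [hpsum 1]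
    rw [h10, h11]
    rw [show (1 - p00 - (1 - p01)) = -(p00 - p01) by ring, abs_neg]
    ring
  have hΔtil' : Δtil = |q0 - q1| := by
    rw [hΔtil, Fin.sum_univ_two]
    have h10 : condP μ (fX ⁻¹' {1}) (Atil ⁻¹' {0}) = 1 - q0 := by linarith [hqsum 0]
    have h11 : condP μ (fX ⁻¹' {1}) (Atil ⁻¹' {1}) = 1 - q1 := by linarith [hqsum 1]
    rw [h10, h11]
    rw [show (1 - q0 - (1 - q1)) = -(q0 - q1) by ring, abs_neg]
    ring
  -- key linear relation
  have hkey : q0 - q1 = (p00 - p01) * (1 - e1 - e2) := by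
    have hA0 := hq 0 0
    have hA1 := hq 1 0
    have hr0 := hrsum 0
    have hr1 := hrsum 1
    rw [he1, he2]
    linear_combination hA0 - hA1 + p00 * hr0 - p01 * hr1
  have he1n : 0 ≤ e1 := he1 ▸ hcnn _ _
  have he2n : 0 ≤ e2 := he2 ▸ hcnn _ _
  have hδ' : |p00 - p01| = 2 * δ := by rw [hδ]; ring
  have habs : |(|1 - e1 - e2| - 1)| ≤ e1 + e2 := by
    have h := abs_abs_sub_abs_le_abs_sub (1 - e1 - e2) 1
    rw [abs_one] at h
    calc |(|1 - e1 - e2| - 1)| ≤ |1 - e1 - e2 - 1| := h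
      _ = |-(e1 + e2)| := by rw [show (1 - e1 - e2 - 1) = -(e1 + e2) by ring]
      _ = e1 + e2 := by rw [abs_neg, abs_of_nonneg (by linarith)]
  calc |Δtil - Δ| = |p00 - p01| * |(|1 - e1 - e2| - 1)| := by
        rw [hΔtil', hΔ', hkey, abs_mul]
        rw [show |p00 - p01| * |1 - e1 - e2| - |p00 - p01|
            = |p00 - p01| * (|1 - e1 - e2| - 1) by ring, abs_mul, abs_abs]
    _ ≤ |p00 - p01| * (e1 + e2) := by
        exact mul_le_mul_of_nonneg_left habs (abs_nonneg _)
    _ = 2 * δ * (e1 + e2) := by rw [hδ']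
end

section
/- Let T, T̂ be invertible n×n real matrices, Λ_p, Λ_p̂, Λ_p̃ invertible diagonal matrices, and let h̃ ∈ ℝⁿ, with the clean vector h satisfying Λ_p̃ h̃ = Tᵀ Λ_p h. Then for any standard basis vectors e_a ≠ e_{a'}: | |(e_a - e_{a'})ᵀ Λ_p̂^{-1}(T̂ᵀ)^{-1} Λ_p̃ h̃| - |(e_a - e_{a'})ᵀ h| | ≤ 2 ‖Λ_p^{-1}‖_∞ ‖Λ_p h‖_∞ ( ‖Λ_p̂^{-1}Λ_p - I‖_∞ ‖T T̂^{-1}‖_1 + ‖I - T T̂^{-1}‖_1 ), where ‖·‖_1 and ‖·‖_∞ denote the induced operator norms (maximum absolute column sum and maximum absolute row sum respectively). -/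
open Matrix

/-- ℓ1-induced operator norm (maximum absolute column sum). -/
noncomputable def matNorm1 {n : ℕ} (M : Matrix (Fin n) (Fin n) ℝ) : ℝ :=
  ⨆ j : Fin n, ∑ i : Fin n, |M i j|

/-- ℓ∞-induced operator norm (maximum absolute row sum). -/
noncomputable def matNormInf {n : ℕ} (M : Matrix (Fin n) (Fin n) ℝ) : ℝ :=
  ⨆ i : Fin n, ∑ j : Fin n, |M i j|

lemma rowSum_le_matNormInf {n : ℕ} (M : Matrix (Fin n) (Fin n) ℝ) (i : Fin n) :
    ∑ j : Fin n, |M i j| ≤ matNormInf M :=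
  le_ciSup (f := fun i : Fin n => ∑ j : Fin n, |M i j|)
    (Set.Finite.bddAbove (Set.finite_range _)) i

lemma matNormInf_nonneg {n : ℕ} (M : Matrix (Fin n) (Fin n) ℝ) (i : Fin n) :
    0 ≤ matNormInf M :=
  le_trans (Finset.sum_nonneg fun j _ => abs_nonneg _) (rowSum_le_matNormInf M i)

lemma matNormInf_transpose {n : ℕ} (M : Matrix (Fin n) (Fin n) ℝ) :
    matNormInf Mᵀ = matNorm1 M := by
  simp [matNormInf, matNorm1, Matrix.transpose_apply]

lemma rowSum_mul_le {n : ℕ} (A B : Matrix (Fin n) (Fin n) ℝ) (i : Fin n) :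
    ∑ j : Fin n, |(A * B) i j| ≤ (∑ k : Fin n, |A i k|) * matNormInf B := by
  calc ∑ j : Fin n, |(A * B) i j| = ∑ j : Fin n, |∑ k : Fin n, A i k * B k j| := by
        simp [Matrix.mul_apply]
    _ ≤ ∑ j : Fin n, ∑ k : Fin n, |A i k * B k j| :=
        Finset.sum_le_sum fun j _ => Finset.abs_sum_le_sum_abs _ _
    _ = ∑ k : Fin n, |A i k| * ∑ j : Fin n, |B k j| := by
        rw [Finset.sum_comm]; simp [abs_mul, Finset.mul_sum]
    _ ≤ ∑ k : Fin n, |A i k| * matNormInf B :=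
        Finset.sum_le_sum fun k _ =>
          mul_le_mul_of_nonneg_left (rowSum_le_matNormInf B k) (abs_nonneg _)
    _ = (∑ k : Fin n, |A i k|) * matNormInf B := (Finset.sum_mul _ _ _).symm

lemma rowSum_mul_le' {n : ℕ} (A B : Matrix (Fin n) (Fin n) ℝ) (i : Fin n)
    (hB : 0 ≤ matNormInf B) :
    ∑ j : Fin n, |(A * B) i j| ≤ matNormInf A * matNormInf B :=
  le_trans (rowSum_mul_le A B i)
    (mul_le_mul_of_nonneg_right (rowSum_le_matNormInf A i) hB)

lemma abs_mulVec_le {n : ℕ} (M : Matrix (Fin n) (Fin n) ℝ) (v : Fin n → ℝ) (i : Fin n) :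
    |(M.mulVec v) i| ≤ (∑ j : Fin n, |M i j|) * ‖v‖ := by
  calc |(M.mulVec v) i| = |∑ j : Fin n, M i j * v j| := by
        simp [Matrix.mulVec, dotProduct]
    _ ≤ ∑ j : Fin n, |M i j * v j| := Finset.abs_sum_le_sum_abs _ _
    _ ≤ ∑ j : Fin n, |M i j| * ‖v‖ := by
        refine Finset.sum_le_sum fun j _ => ?_
        rw [abs_mul]
        exact mul_le_mul_of_nonneg_left
          (by simpa [Real.norm_eq_abs] using norm_le_pi_norm v j) (abs_nonneg _)
    _ = (∑ j : Fin n, |M i j|) * ‖v‖ := (Finset.sum_mul _ _ _).symm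

/-- core calibration error bound. For the calibrated estimate
`Λ_p̂⁻¹ (T̂ᵀ)⁻¹ Λ_p̃ h̃` of the clean vector `h` (where `Λ_p̃ h̃ = Tᵀ Λ_p h`),
the disparity error between any two coordinates is bounded by
`2 ‖Λ_p⁻¹‖_∞ ‖Λ_p h‖_∞ (‖Λ_p̂⁻¹ Λ_p - I‖_∞ ‖T T̂⁻¹‖₁ + ‖I - T T̂⁻¹‖₁)`. -/
theorem stmt14 {n : ℕ} (T That : Matrix (Fin n) (Fin n) ℝ)
    (hT : IsUnit T.det) (hThat : IsUnit That.det)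
    (p phat ptil : Fin n → ℝ)
    (hp : ∀ i, p i ≠ 0) (hphat : ∀ i, phat i ≠ 0) (hptil : ∀ i, ptil i ≠ 0)
    (h htil : Fin n → ℝ)
    (hrel : (Matrix.diagonal ptil).mulVec htil = Tᵀ.mulVec ((Matrix.diagonal p).mulVec h))
    (cal : Fin n → ℝ)
    (hcal : cal = (Matrix.diagonal phat)⁻¹.mulVec
      (Thatᵀ⁻¹.mulVec ((Matrix.diagonal ptil).mulVec htil)))
    (a a' : Fin n) (haa' : a ≠ a') :
    abs (abs (cal a - cal a') - abs (h a - h a')) ≤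
      2 * matNormInf (Matrix.diagonal p)⁻¹ * ‖(Matrix.diagonal p).mulVec h‖ *
        (matNormInf ((Matrix.diagonal phat)⁻¹ * Matrix.diagonal p - 1) *
            matNorm1 (T * That⁻¹)
          + matNorm1 (1 - T * That⁻¹)) := by
  set D : Matrix (Fin n) (Fin n) ℝ := Matrix.diagonal p with hDdef
  set Dh : Matrix (Fin n) (Fin n) ℝ := Matrix.diagonal phat with hDhdef
  set A : Matrix (Fin n) (Fin n) ℝ := T * That⁻¹ with hAdef
  set v : Fin n → ℝ := D.mulVec h with hvdef
  have hDdet : IsUnit D.det := by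
    rw [hDdef, Matrix.det_diagonal]
    exact isUnit_iff_ne_zero.2 (Finset.prod_ne_zero_iff.2 fun i _ => hp i)
  have hDhdet : IsUnit Dh.det := by
    rw [hDhdef, Matrix.det_diagonal]
    exact isUnit_iff_ne_zero.2 (Finset.prod_ne_zero_iff.2 fun i _ => hphat i)
  -- cal = (Dh⁻¹ * Aᵀ).mulVec v
  have hAT : Thatᵀ⁻¹ * Tᵀ = Aᵀ := by
    rw [hAdef, Matrix.transpose_mul, Matrix.transpose_nonsing_inv]
  have hcal' : cal = (Dh⁻¹ * Aᵀ).mulVec v := by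
    rw [hcal, hrel, Matrix.mulVec_mulVec, Matrix.mulVec_mulVec, Matrix.mul_assoc, hAT]
  -- h = D⁻¹.mulVec v
  have hh : h = D⁻¹.mulVec v := by
    rw [hvdef, Matrix.mulVec_mulVec, Matrix.nonsing_inv_mul D hDdet, Matrix.one_mulVec]
  -- matrix identity
  have hcomm : D⁻¹ * (Dh⁻¹ * D) = Dh⁻¹ := by
    have h1 : Dh⁻¹ * D = D * Dh⁻¹ := by
      rw [hDdef, hDhdef, Matrix.inv_diagonal, Matrix.diagonal_mul_diagonal,
        Matrix.diagonal_mul_diagonal]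
      simp [mul_comm]
    rw [h1, ← Matrix.mul_assoc, Matrix.nonsing_inv_mul D hDdet, Matrix.one_mul]
  set N : Matrix (Fin n) (Fin n) ℝ := (Dh⁻¹ * D - 1) * Aᵀ + (Aᵀ - 1) with hNdef
  have hMid : D⁻¹ * N = Dh⁻¹ * Aᵀ - D⁻¹ := by
    rw [hNdef]
    have : (Dh⁻¹ * D - 1) * Aᵀ + (Aᵀ - 1) = Dh⁻¹ * D * Aᵀ - 1 := by
      noncomm_ring
    rw [this, Matrix.mul_sub, Matrix.mul_one, ← Matrix.mul_assoc, hcomm]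
  have hdiff : ∀ i, cal i - h i = ((D⁻¹ * N).mulVec v) i := by
    intro i
    rw [hMid, Matrix.sub_mulVec, hcal', hh]
    simp
  -- row-sum bound on N
  have hA1nonneg : 0 ≤ matNormInf Aᵀ := matNormInf_nonneg _ a
  have hNbound : ∀ k, ∑ j : Fin n, |N k j| ≤
      matNormInf (Dh⁻¹ * D - 1) * matNormInf Aᵀ + matNormInf (Aᵀ - 1) := by
    intro k
    calc ∑ j : Fin n, |N k j|
        ≤ ∑ j : Fin n, (|((Dh⁻¹ * D - 1) * Aᵀ) k j| + |(Aᵀ - 1) k j|) := by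
          refine Finset.sum_le_sum fun j _ => ?_
          rw [hNdef]
          exact abs_add_le _ _
      _ = (∑ j : Fin n, |((Dh⁻¹ * D - 1) * Aᵀ) k j|) + ∑ j : Fin n, |(Aᵀ - 1) k j| :=
          Finset.sum_add_distrib
      _ ≤ matNormInf (Dh⁻¹ * D - 1) * matNormInf Aᵀ + matNormInf (Aᵀ - 1) :=
          add_le_add (rowSum_mul_le' _ _ k hA1nonneg) (rowSum_le_matNormInf _ k)
  set c : ℝ := matNormInf (Dh⁻¹ * D - 1) * matNormInf Aᵀ + matNormInf (Aᵀ - 1) with hcdef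
  have hcnonneg : 0 ≤ c :=
    le_trans (Finset.sum_nonneg fun j _ => abs_nonneg _) (hNbound a)
  haveI : Nonempty (Fin n) := ⟨a⟩
  have hNnorm : matNormInf N ≤ c := ciSup_le hNbound
  -- per-entry bound
  have hEntry : ∀ i, |cal i - h i| ≤ matNormInf D⁻¹ * c * ‖v‖ := by
    intro i
    rw [hdiff i]
    refine le_trans (abs_mulVec_le _ v i) ?_
    refine mul_le_mul_of_nonneg_right ?_ (norm_nonneg v)
    calc ∑ j : Fin n, |(D⁻¹ * N) i j| ≤ (∑ k : Fin n, |D⁻¹ i k|) * matNormInf N :=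
          rowSum_mul_le _ _ i
      _ ≤ matNormInf D⁻¹ * c := by
          apply mul_le_mul (rowSum_le_matNormInf _ i) hNnorm
            (matNormInf_nonneg _ a) ?_
          exact le_trans (Finset.sum_nonneg fun j _ => abs_nonneg _)
            (rowSum_le_matNormInf _ i)
  -- translate norms
  have hT1 : matNormInf Aᵀ = matNorm1 A := matNormInf_transpose A
  have hT2 : matNormInf (Aᵀ - 1) = matNorm1 (1 - A) := by
    unfold matNormInf matNorm1
    congr 1; funext i
    refine Finset.sum_congr rfl fun j _ => ?_
    simp only [Matrix.sub_apply, Matrix.transpose_apply, Matrix.one_apply]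
    rw [abs_sub_comm]
    congr 1
    by_cases hij : i = j <;> simp [hij, eq_comm]
  -- final
  have t1 : |(|cal a - cal a'| - |h a - h a'|)| ≤ |(cal a - cal a') - (h a - h a')| :=
    abs_abs_sub_abs_le_abs_sub _ _
  have t2 : (cal a - cal a') - (h a - h a') = (cal a - h a) - (cal a' - h a') := by ring
  have t3 : |(cal a - h a) - (cal a' - h a')| ≤ |cal a - h a| + |cal a' - h a'| :=
    abs_sub _ _
  calc |( |cal a - cal a'| - |h a - h a'| )| ≤ 2 * (matNormInf D⁻¹ * c * ‖v‖) := by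
        rw [t2] at t1
        have := hEntry a; have := hEntry a'
        linarith
    _ = 2 * matNormInf D⁻¹ * ‖v‖ *
        (matNormInf (Dh⁻¹ * D - 1) * matNorm1 A + matNorm1 (1 - A)) := by
        rw [hcdef, hT1, hT2]; ring
end
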